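/- arXiv:2505.06215 — 3 statements merged into one kernel-verified Lean document; each statement's English description precedes it below -/
import Mathlib

section
/- For every Δ ≥ 1, ε > 0 and r ≥ 0, there exists N such that for every finite graph G with maximum degree at most Δ there is a finite graph G' with maximum degree at most Δ and |V(G')| ≤ N satisfying |u_r(F,G) − u_r(F,G')| < ε for all rooted graphs F of radius ≤ r. -/
structure RootedGraph where
  n : ℕ
  graph : SimpleGraph (Fin n)
  root : Fin n

def RootedGraph.Iso (F F' : RootedGraph) : Prop :=
  ∃ e : F.graph ≃g F'.graph, e F.root = F'.root

def RootedGraph.MaxDegLE (F : RootedGraph) (Δ : ℕ) : Prop :=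
  ∀ v, (F.graph.neighborSet v).ncard ≤ Δ

def RootedGraph.RadiusLE (F : RootedGraph) (r : ℕ) : Prop :=
  ∀ v, F.graph.Reachable F.root v ∧ F.graph.dist F.root v ≤ r

def SimpleGraph.maxDegLE {V : Type} (G : SimpleGraph V) (Δ : ℕ) : Prop :=
  ∀ v, (G.neighborSet v).ncard ≤ Δ

def ballSet {V : Type} (G : SimpleGraph V) (r : ℕ) (v : V) : Set V :=
  {u | G.Reachable v u ∧ G.dist v u ≤ r}

lemma mem_ballSet_self {V : Type} (G : SimpleGraph V) (r : ℕ) (v : V) :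
    v ∈ ballSet G r v := ⟨SimpleGraph.Reachable.refl v, by rw [SimpleGraph.dist_self]; exact Nat.zero_le r⟩

def BallIsoAt {V : Type} (G : SimpleGraph V) (r : ℕ) (v : V) (F : RootedGraph) : Prop :=
  ∃ e : (G.induce (ballSet G r v)) ≃g F.graph,
    e ⟨v, mem_ballSet_self G r v⟩ = F.root

noncomputable def uStat {V : Type} (G : SimpleGraph V) (r : ℕ) (F : RootedGraph) : ℝ :=
  (Nat.card {v : V // BallIsoAt G r v F}) / (Nat.card V)

/-! An `r`-ball in a graph of maximum degree `Δ` has at most `(Δ + 1) ^ r` vertices, so only the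
finitely many rooted graphs on at most `(Δ + 1) ^ r` vertices can have a nonzero statistic
`uStat G r F`, and the vector of these statistics lies in a finite-dimensional unit cube. The cube
is totally bounded, so the statistic vectors of all finite graphs of maximum degree `Δ` are
covered by finitely many `ε`-balls centred at such vectors; `N` is the largest number of vertices
of a centre. -/

open SimpleGraph

section BoundedDegree

variable {V W : Type} {G : SimpleGraph V} {H : SimpleGraph W}

theorem SimpleGraph.Hom.dist_le (f : G →g H) {u v : V} (h : G.Reachable u v) :
    H.dist (f u) (f v) ≤ G.dist u v := by
  obtain ⟨p, hp⟩ := h.exists_walk_length_eq_dist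
  simpa [hp] using SimpleGraph.dist_le (p.map f)

theorem SimpleGraph.Iso.dist_eq (e : G ≃g H) (u v : V) : H.dist (e u) (e v) = G.dist u v := by
  by_cases h : G.Reachable u v
  · refine le_antisymm (e.toHom.dist_le h) ?_
    simpa using e.symm.toHom.dist_le ((Iso.reachable_iff (φ := e)).mpr h)
  · rw [dist_eq_zero_of_not_reachable h,
      dist_eq_zero_of_not_reachable (mt (Iso.reachable_iff (φ := e)).mp h)]

theorem SimpleGraph.Iso.apply_mem_ballSet_iff (e : G ≃g H) (r : ℕ) (v u : V) :
    e u ∈ ballSet H r (e v) ↔ u ∈ ballSet G r v := by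
  simp only [ballSet, Set.mem_ofPred_eq, Iso.reachable_iff, e.dist_eq]

theorem BallIsoAt.of_iso (e : G ≃g H) {r : ℕ} {v : V} {F : RootedGraph}
    (h : BallIsoAt G r v F) : BallIsoAt H r (e v) F := by
  obtain ⟨f, hf⟩ := h
  let eBall := e.induce (e.toEquiv.bijOn fun u => e.apply_mem_ballSet_iff r v u)
  refine ⟨eBall.symm.trans f, ?_⟩
  rw [RelIso.trans_apply, ← hf]
  congr 1
  exact eBall.symm_apply_eq.mpr rfl

theorem SimpleGraph.Iso.uStat_eq (e : G ≃g H) (r : ℕ) (F : RootedGraph) :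
    uStat G r F = uStat H r F := by
  have hball (v : V) : BallIsoAt G r v F ↔ BallIsoAt H r (e v) F :=
    ⟨BallIsoAt.of_iso e, fun h => by simpa using h.of_iso e.symm⟩
  unfold uStat
  rw [Nat.card_congr (e.toEquiv.subtypeEquiv (q := fun w => BallIsoAt H r w F) hball),
    Nat.card_congr e.toEquiv]

theorem SimpleGraph.maxDegLE.of_iso {Δ : ℕ} (hG : G.maxDegLE Δ) (e : G ≃g H) :
    H.maxDegLE Δ := fun w => by
  simpa only [Nat.card_coe_set_eq] using (Nat.card_congr (e.symm.mapNeighborSet w)).le.trans (hG _)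

theorem ballSet_zero (G : SimpleGraph V) (x : V) : ballSet G 0 x = {x} := by
  ext u
  simp only [ballSet, Set.mem_ofPred_eq, Nat.le_zero, Set.mem_singleton_iff]
  exact ⟨fun ⟨hr, hd⟩ => (hr.dist_eq_zero_iff.mp hd).symm,
    by rintro rfl; exact ⟨.refl _, dist_self⟩⟩

theorem ballSet_succ_subset (G : SimpleGraph V) (x : V) (k : ℕ) :
    ballSet G (k + 1) x ⊆ ⋃ v ∈ ballSet G k x, insert v (G.neighborSet v) := by
  rintro u ⟨hr, hd⟩
  simp only [Set.mem_iUnion, Set.mem_insert_iff, mem_neighborSet]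
  by_cases hk : G.dist x u ≤ k
  · exact ⟨u, ⟨hr, hk⟩, Or.inl rfl⟩
  obtain ⟨p, hp⟩ := hr.exists_walk_length_eq_dist
  have hp_nil : ¬ p.Nil := fun h => by simp [h.length_eq_zero] at hp; omega
  refine ⟨p.penultimate, ⟨p.dropLast.reachable, ?_⟩, Or.inr (p.adj_penultimate hp_nil)⟩
  calc G.dist x p.penultimate ≤ p.dropLast.length := dist_le _
    _ ≤ k := by rw [Walk.length_dropLast]; omega

theorem ncard_ballSet_le [Finite V] {Δ : ℕ} (hG : G.maxDegLE Δ) (x : V) (k : ℕ) :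
    (ballSet G k x).ncard ≤ (Δ + 1) ^ k := by
  induction k with
  | zero => simp [ballSet_zero]
  | succ k ih =>
    let B := (ballSet G k x).toFinite.toFinset
    calc (ballSet G (k + 1) x).ncard
        ≤ (⋃ v ∈ B, insert v (G.neighborSet v)).ncard :=
          Set.ncard_le_ncard (by simpa [B] using ballSet_succ_subset G x k) (Set.toFinite _)
      _ ≤ ∑ v ∈ B, (insert v (G.neighborSet v)).ncard := B.set_ncard_biUnion_le _
      _ ≤ ∑ _v ∈ B, (Δ + 1) :=
          Finset.sum_le_sum fun v _ => (Set.ncard_insert_le _ _).trans (by simpa using hG v)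
      _ = (ballSet G k x).ncard * (Δ + 1) := by
          rw [Finset.sum_const, smul_eq_mul, Set.ncard_eq_toFinset_card]
      _ ≤ (Δ + 1) ^ (k + 1) := by rw [pow_succ]; exact Nat.mul_le_mul_right _ ih

theorem BallIsoAt.n_eq_ncard {r : ℕ} {v : V} {F : RootedGraph} (h : BallIsoAt G r v F) :
    F.n = (ballSet G r v).ncard := by
  obtain ⟨f, -⟩ := h
  rw [← Nat.card_coe_set_eq, Nat.card_congr f.toEquiv, Nat.card_eq_fintype_card, Fintype.card_fin]

theorem uStat_eq_zero_of_lt [Finite V] {Δ r : ℕ} (hG : G.maxDegLE Δ) {F : RootedGraph}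
    (hF : (Δ + 1) ^ r < F.n) : uStat G r F = 0 := by
  have : IsEmpty {v : V // BallIsoAt G r v F} :=
    ⟨fun ⟨v, hv⟩ => (hv.n_eq_ncard ▸ hF).not_ge (ncard_ballSet_le hG v r)⟩
  simp [uStat]

theorem uStat_mem_Icc [Finite V] (G : SimpleGraph V) (r : ℕ) (F : RootedGraph) :
    uStat G r F ∈ Set.Icc 0 1 :=
  ⟨by unfold uStat; positivity,
    div_le_one_of_le₀ (by exact_mod_cast Finite.card_subtype_le _) (Nat.cast_nonneg _)⟩

/-- Rooted graphs on at most `M` vertices are encoded by the finite type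
`Σ n : Fin (M + 1), SimpleGraph (Fin n) × Fin n`. -/
noncomputable def ballProfile (M r : ℕ) (G : SimpleGraph V) :
    (Σ n : Fin (M + 1), SimpleGraph (Fin n) × Fin n) → ℝ :=
  fun F => uStat G r ⟨F.1, F.2.1, F.2.2⟩

theorem ballProfile_mem_Icc [Finite V] (M r : ℕ) (G : SimpleGraph V) :
    ballProfile M r G ∈ Set.Icc 0 1 :=
  ⟨fun _ => (uStat_mem_Icc G r _).1, fun _ => (uStat_mem_Icc G r _).2⟩

theorem abs_uStat_sub_le_dist_ballProfile [Finite V] [Finite W] {Δ r : ℕ} (hG : G.maxDegLE Δ)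
    (hH : H.maxDegLE Δ) (F : RootedGraph) :
    |uStat G r F - uStat H r F| ≤
      dist (ballProfile ((Δ + 1) ^ r) r G) (ballProfile ((Δ + 1) ^ r) r H) := by
  by_cases hF : F.n ≤ (Δ + 1) ^ r
  · rw [← Real.dist_eq]
    exact dist_le_pi_dist (ballProfile _ r G) (ballProfile _ r H)
      ⟨⟨F.n, Nat.lt_succ_of_le hF⟩, F.graph, F.root⟩
  · rw [uStat_eq_zero_of_lt hG (not_le.mp hF), uStat_eq_zero_of_lt hH (not_le.mp hF)]
    simp

end BoundedDegree

theorem TotallyBounded.exists_finset_dist_lt {α E : Type*} [PseudoMetricSpace E] {f : α → E}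
    (hf : TotallyBounded (Set.range f)) {ε : ℝ} (hε : 0 < ε) :
    ∃ t : Finset α, ∀ a, ∃ b ∈ t, dist (f a) (f b) < ε := by
  rw [← Set.image_univ] at hf
  obtain ⟨s, -, hs, hcover⟩ :=
    Set.exists_subset_image_finite_and.mp (Metric.finite_approx_of_totallyBounded hf ε hε)
  refine ⟨hs.toFinset, fun a => ?_⟩
  obtain ⟨_, ⟨b, hb, rfl⟩, hab⟩ := Set.mem_iUnion₂.mp (hcover ⟨a, trivial, rfl⟩)
  exact ⟨b, hs.mem_toFinset.mpr hb, hab⟩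

theorem sparse_regularity_exists_bound_general (Δ : ℕ) (ε : ℝ) (hε : 0 < ε) (r : ℕ) :
    ∃ N : ℕ, ∀ (V : Type) [Fintype V] [Nonempty V] (G : SimpleGraph V),
      G.maxDegLE Δ →
      ∃ (n : ℕ) (G' : SimpleGraph (Fin n)), n ≠ 0 ∧ n ≤ N ∧ G'.maxDegLE Δ ∧
        ∀ F : RootedGraph, F.RadiusLE r → |uStat G r F - uStat G' r F| < ε := by
  let profile (A : Σ n : ℕ, {G : SimpleGraph (Fin n) // n ≠ 0 ∧ G.maxDegLE Δ}) :=
    ballProfile ((Δ + 1) ^ r) r A.2.1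
  have hprofile : TotallyBounded (Set.range profile) :=
    (totallyBounded_Icc 0 1).subset
      (Set.range_subset_iff.mpr fun A => ballProfile_mem_Icc _ r A.2.1)
  obtain ⟨t, ht⟩ := hprofile.exists_finset_dist_lt hε
  refine ⟨t.sup Sigma.fst, fun V _ _ G hG => ?_⟩
  let e := Iso.map (Fintype.equivFin V) G
  have hG₀ := hG.of_iso e
  obtain ⟨⟨n, G', hn, hG'⟩, hmem, hdist⟩ := ht ⟨_, _, Fintype.card_ne_zero, hG₀⟩
  refine ⟨n, G', hn, t.le_sup (f := Sigma.fst) hmem, hG', fun F _ => ?_⟩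
  rw [e.uStat_eq]
  exact (abs_uStat_sub_le_dist_ballProfile hG₀ hG' F).trans_lt hdist

theorem sparse_regularity_exists_bound (Δ : ℕ) (hΔ : 1 ≤ Δ) (ε : ℝ) (hε : 0 < ε) (r : ℕ) :
    ∃ N : ℕ, ∀ (V : Type) [Fintype V] [Nonempty V] (G : SimpleGraph V),
      G.maxDegLE Δ →
      ∃ (n : ℕ) (G' : SimpleGraph (Fin n)), n ≠ 0 ∧ n ≤ N ∧ G'.maxDegLE Δ ∧
        ∀ F : RootedGraph, F.RadiusLE r → |uStat G r F - uStat G' r F| < ε :=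
  sparse_regularity_exists_bound_general Δ ε hε r
end

section
/- The invariant random subgroups of F_d are exactly the measures in the decreasing intersection of the sets of k-pseudo-IRSs: IRS_d = ⋂_k P-IRS_d(k), where the intersection is decreasing in k. -/
open MeasureTheory

def SubgroupFn (d : ℕ) (S : FreeGroup (Fin d) → Bool) : Prop :=
  S 1 = true ∧ (∀ g h, S g = true → S h = true → S (g * h) = true) ∧
    ∀ g, S g = true → S g⁻¹ = true

def conjFn (d : ℕ) (g : FreeGroup (Fin d)) (S : FreeGroup (Fin d) → Bool) :
    FreeGroup (Fin d) → Bool := fun x => S (g⁻¹ * x * g)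

/-- An invariant random subgroup of the free group `F_d`, as a probability
measure on `𝒫(F_d) ≅ 2^{F_d}` supported on subgroups and conjugation invariant. -/
def IsIRS (d : ℕ) (μ : Measure (FreeGroup (Fin d) → Bool)) : Prop :=
  IsProbabilityMeasure μ ∧ μ {S | SubgroupFn d S} = 1 ∧
    ∀ g : FreeGroup (Fin d), μ.map (conjFn d g) = μ

/-- `S` is (the indicator of) a `k`-pseudo-subgroup: the intersection of the
ball `W_d(k)` with a subgroup. -/
def PseudoSubgroupFn (d k : ℕ) (S : FreeGroup (Fin d) → Bool) : Prop :=
  ∃ H : Subgroup (FreeGroup (Fin d)), ∀ x, S x = true ↔ (x ∈ H ∧ x.norm ≤ k)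

/-- Restriction of a subset of `F_d` to the ball `W_d(k)`. -/
def restrictFn (d k : ℕ) (S : FreeGroup (Fin d) → Bool) : FreeGroup (Fin d) → Bool :=
  fun x => S x && decide (x.norm ≤ k)

/-- The domain of the partial conjugation by the generator `a_i` on `W_d(k)`:
elements `x` of the ball whose conjugate stays in the ball. -/
def conjDom (d k : ℕ) (i : Fin d) : Set (FreeGroup (Fin d)) :=
  {x | x.norm ≤ k ∧ ((FreeGroup.of i)⁻¹ * x * FreeGroup.of i).norm ≤ k}

/-- `μ`, viewed through its restriction to the ball `W_d(k)`, is a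
`k`-pseudo-IRS: it is supported on `k`-pseudo-subgroups and is invariant under
conjugation by the standard generators wherever this conjugation is defined. -/
def IsPIRS (d k : ℕ) (μ : Measure (FreeGroup (Fin d) → Bool)) : Prop :=
  IsProbabilityMeasure μ ∧
  (μ.map (restrictFn d k)) {S | PseudoSubgroupFn d k S} = 1 ∧
  ∀ i : Fin d,
    μ.map (fun S => fun x : conjDom d k i => S x.1) =
      μ.map (fun S => fun x : conjDom d k i => S ((FreeGroup.of i)⁻¹ * x.1 * FreeGroup.of i))

/-! ### Auxiliary lemmas -/

instance countableFreeGroupFin (d : ℕ) : Countable (FreeGroup (Fin d)) := by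
  have : Function.Surjective (FreeGroup.mk : List (Fin d × Bool) → FreeGroup (Fin d)) :=
    fun x => Quot.inductionOn x (fun L => ⟨L, rfl⟩)
  exact this.countable

lemma meas_precomp {α β : Type*} (φ : β → α) :
    Measurable (fun S : α → Bool => fun b : β => S (φ b)) :=
  measurable_pi_iff.2 fun _ => measurable_pi_apply _

lemma measurable_restrictFn (d k : ℕ) : Measurable (restrictFn d k) :=
  measurable_pi_iff.2 fun x =>
    (measurable_from_top (f := fun b : Bool => b && decide (x.norm ≤ k))).comp
      (measurable_pi_apply x)

lemma measurable_conjFn (d : ℕ) (g : FreeGroup (Fin d)) : Measurable (conjFn d g) :=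
  measurable_pi_iff.2 fun _ => measurable_pi_apply _

lemma conjFn_mul (d : ℕ) (g h : FreeGroup (Fin d)) :
    conjFn d (g * h) = conjFn d g ∘ conjFn d h := by
  funext S x
  simp [conjFn, mul_assoc]

lemma conjFn_one (d : ℕ) : conjFn d 1 = id := by
  funext S x
  simp [conjFn]

lemma mem_closure_iff_list {G : Type*} [Group G] (T : Set G) (x : G) :
    x ∈ Subgroup.closure T ↔ ∃ l : List G, (∀ y ∈ l, y ∈ T ∨ y⁻¹ ∈ T) ∧ l.prod = x := by
  rw [← Subgroup.mem_toSubmonoid, Subgroup.closure_toSubmonoid]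
  constructor
  · intro hx
    obtain ⟨l, h1, h2⟩ := Submonoid.exists_list_of_mem_closure hx
    exact ⟨l, fun y hy => by simpa [Set.mem_inv] using h1 y hy, h2⟩
  · rintro ⟨l, h1, rfl⟩
    exact Submonoid.list_prod_mem _ fun y hy =>
      Submonoid.subset_closure (by simpa [Set.mem_inv] using h1 y hy)

lemma measurableSet_eval (d : ℕ) (x : FreeGroup (Fin d)) (b : Bool) :
    MeasurableSet {S : FreeGroup (Fin d) → Bool | S x = b} := by
  have : {S : FreeGroup (Fin d) → Bool | S x = b} =
      (fun S : FreeGroup (Fin d) → Bool => S x) ⁻¹' {b} := by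
    ext S; simp
  rw [this]
  exact measurable_pi_apply x (show MeasurableSet {b} from trivial)

lemma measurableSet_closureMem (d : ℕ) (x : FreeGroup (Fin d)) :
    MeasurableSet {S : FreeGroup (Fin d) → Bool | x ∈ Subgroup.closure {y | S y = true}} := by
  have : {S : FreeGroup (Fin d) → Bool | x ∈ Subgroup.closure {y | S y = true}} =
      ⋃ (l : List (FreeGroup (Fin d))) (_ : l.prod = x),
        ⋂ (y : FreeGroup (Fin d)) (_ : y ∈ l),
          ({S : FreeGroup (Fin d) → Bool | S y = true} ∪ {S | S y⁻¹ = true}) := by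
    ext S
    simp only [Set.mem_setOf_eq, mem_closure_iff_list, Set.mem_iUnion, Set.mem_iInter,
      Set.mem_union, Set.mem_setOf_eq]
    constructor
    · rintro ⟨l, h1, h2⟩; exact ⟨l, h2, h1⟩
    · rintro ⟨l, h2, h1⟩; exact ⟨l, h1, h2⟩
  rw [this]
  exact MeasurableSet.iUnion fun l => MeasurableSet.iUnion fun _ =>
    MeasurableSet.iInter fun y => MeasurableSet.iInter fun _ =>
      (measurableSet_eval d y true).union (measurableSet_eval d y⁻¹ true)

lemma pseudo_iff (d k : ℕ) (S : FreeGroup (Fin d) → Bool) :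
    PseudoSubgroupFn d k S ↔
      (∀ x, S x = true → x.norm ≤ k) ∧
        ∀ x, x.norm ≤ k → (S x = true ↔ x ∈ Subgroup.closure {y | S y = true}) := by
  constructor
  · rintro ⟨H, hH⟩
    refine ⟨fun x hx => ((hH x).1 hx).2,
      fun x hx => ⟨fun h => Subgroup.subset_closure h, fun h => ?_⟩⟩
    have hle : Subgroup.closure {y | S y = true} ≤ H :=
      (Subgroup.closure_le _).2 fun y hy => ((hH y).1 hy).1
    exact (hH x).2 ⟨hle h, hx⟩
  · rintro ⟨h1, h2⟩
    exact ⟨Subgroup.closure {y | S y = true}, fun x =>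
      ⟨fun hx => ⟨Subgroup.subset_closure hx, h1 x hx⟩, fun ⟨hm, hn⟩ => (h2 x hn).2 hm⟩⟩

lemma measurableSet_PSG (d k : ℕ) :
    MeasurableSet {S : FreeGroup (Fin d) → Bool | PseudoSubgroupFn d k S} := by
  have heq : {S : FreeGroup (Fin d) → Bool | PseudoSubgroupFn d k S} =
      (⋂ (x : FreeGroup (Fin d)) (_ : ¬ x.norm ≤ k),
        {S : FreeGroup (Fin d) → Bool | S x = true}ᶜ) ∩
      ⋂ (x : FreeGroup (Fin d)) (_ : x.norm ≤ k),
        (({S : FreeGroup (Fin d) → Bool | S x = true} ∩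
            {S | x ∈ Subgroup.closure {y | S y = true}}) ∪
          ({S : FreeGroup (Fin d) → Bool | S x = true}ᶜ ∩
            {S | x ∈ Subgroup.closure {y | S y = true}}ᶜ)) := by
    ext S
    simp only [Set.mem_setOf_eq, pseudo_iff, Set.mem_inter_iff, Set.mem_iInter,
      Set.mem_compl_iff, Set.mem_union, Set.mem_setOf_eq]
    constructor
    · rintro ⟨h1, h2⟩
      refine ⟨fun x hx hSx => hx (h1 x hSx), fun x hx => ?_⟩
      by_cases hS : S x = true
      · exact Or.inl ⟨hS, (h2 x hx).1 hS⟩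
      · exact Or.inr ⟨hS, fun hc => hS ((h2 x hx).2 hc)⟩
    · rintro ⟨h1, h2⟩
      refine ⟨fun x hSx => by_contra fun hx => h1 x hx hSx, fun x hx => ?_⟩
      rcases h2 x hx with ⟨hS, hc⟩ | ⟨hS, hc⟩
      · exact ⟨fun _ => hc, fun _ => hS⟩
      · exact ⟨fun h => absurd h hS, fun h => absurd h hc⟩
  rw [heq]
  exact ((MeasurableSet.iInter fun x => MeasurableSet.iInter fun _ =>
      (measurableSet_eval d x true).compl)).inter
    (MeasurableSet.iInter fun x => MeasurableSet.iInter fun _ =>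
      (((measurableSet_eval d x true).inter (measurableSet_closureMem d x)).union
        (((measurableSet_eval d x true).compl).inter (measurableSet_closureMem d x).compl)))

lemma restrict_of_subgroup (d k : ℕ) (S : FreeGroup (Fin d) → Bool) (h : SubgroupFn d S) :
    PseudoSubgroupFn d k (restrictFn d k S) := by
  refine ⟨{ carrier := {x | S x = true}
            one_mem' := h.1
            mul_mem' := fun ha hb => h.2.1 _ _ ha hb
            inv_mem' := fun ha => h.2.2 _ ha }, fun x => ?_⟩
  simp only [restrictFn, Bool.and_eq_true, decide_eq_true_eq]
  rfl

lemma restrict_of_pseudo (d k : ℕ) (S : FreeGroup (Fin d) → Bool)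
    (h : PseudoSubgroupFn d (k + 1) S) : PseudoSubgroupFn d k (restrictFn d k S) := by
  obtain ⟨H, hH⟩ := h
  refine ⟨H, fun x => ?_⟩
  simp only [restrictFn, Bool.and_eq_true, decide_eq_true_eq, hH x]
  constructor
  · rintro ⟨⟨h1, _⟩, h3⟩; exact ⟨h1, h3⟩
  · rintro ⟨h1, h3⟩; exact ⟨⟨h1, h3.trans (Nat.le_succ k)⟩, h3⟩

lemma subgroup_of_all_pseudo (d : ℕ) (S : FreeGroup (Fin d) → Bool)
    (h : ∀ k, PseudoSubgroupFn d k (restrictFn d k S)) : SubgroupFn d S := by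
  have key : ∀ (k) (x : FreeGroup (Fin d)), x.norm ≤ k →
      ∀ H : Subgroup (FreeGroup (Fin d)),
        (∀ y, restrictFn d k S y = true ↔ (y ∈ H ∧ y.norm ≤ k)) →
        (S x = true ↔ x ∈ H) := by
    intro k x hx H hH
    have := hH x
    simp only [restrictFn, Bool.and_eq_true, decide_eq_true_eq] at this
    constructor
    · intro hS; exact ((this.1 ⟨hS, hx⟩).1)
    · intro hm; exact (this.2 ⟨hm, hx⟩).1
  refine ⟨?_, ?_, ?_⟩
  · obtain ⟨H, hH⟩ := h 0
    exact (key 0 1 (by simp [FreeGroup.norm_one]) H hH).2 H.one_mem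
  · intro g g' hg hg'
    obtain ⟨H, hH⟩ := h (g.norm + g'.norm)
    have h1 := (key _ g (Nat.le_add_right _ _) H hH).1 hg
    have h2 := (key _ g' (Nat.le_add_left _ _) H hH).1 hg'
    exact (key _ (g * g') (FreeGroup.norm_mul_le g g') H hH).2 (H.mul_mem h1 h2)
  · intro g hg
    obtain ⟨H, hH⟩ := h g.norm
    have h1 := (key _ g le_rfl H hH).1 hg
    exact (key _ g⁻¹ (le_of_eq FreeGroup.norm_inv_eq) H hH).2 (H.inv_mem h1)

theorem IRS_eq_iInter_PIRS (d : ℕ) :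
    ({μ : Measure (FreeGroup (Fin d) → Bool) | IsIRS d μ} =
      ⋂ k : ℕ, {μ : Measure (FreeGroup (Fin d) → Bool) | IsPIRS d k μ}) ∧
    ∀ k : ℕ, {μ : Measure (FreeGroup (Fin d) → Bool) | IsPIRS d (k + 1) μ} ⊆
      {μ : Measure (FreeGroup (Fin d) → Bool) | IsPIRS d k μ} := by
  constructor
  · ext μ
    simp only [Set.mem_setOf_eq, Set.mem_iInter]
    constructor
    · rintro ⟨hp, hs, hc⟩ k
      haveI := hp
      refine ⟨hp, ?_, ?_⟩
      · rw [Measure.map_apply (measurable_restrictFn d k) (measurableSet_PSG d k)]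
        refine le_antisymm prob_le_one ?_
        calc (1 : ENNReal) = μ {S | SubgroupFn d S} := hs.symm
          _ ≤ μ (restrictFn d k ⁻¹' {S | PseudoSubgroupFn d k S}) :=
            measure_mono fun S hS => restrict_of_subgroup d k S hS
      · intro i
        have e : (fun S => fun x : conjDom d k i =>
              S ((FreeGroup.of i)⁻¹ * x.1 * FreeGroup.of i)) =
            (fun S => fun x : conjDom d k i => S x.1) ∘ conjFn d (FreeGroup.of i) := rfl
        rw [e, ← Measure.map_map (meas_precomp _) (measurable_conjFn d _), hc]
    · intro h
      haveI hp := (h 0).1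
      refine ⟨(h 0).1, ?_, ?_⟩
      · set A : ℕ → Set (FreeGroup (Fin d) → Bool) :=
          fun k => restrictFn d k ⁻¹' {S | PseudoSubgroupFn d k S} with hA
        have hAm : ∀ k, MeasurableSet (A k) :=
          fun k => (measurable_restrictFn d k) (measurableSet_PSG d k)
        have hA1 : ∀ k, μ (A k) = 1 := fun k => by
          rw [hA, ← Measure.map_apply (measurable_restrictFn d k) (measurableSet_PSG d k)]
          exact (h k).2.1
        have hU : μ (⋃ k, (A k)ᶜ) = 0 :=
          measure_iUnion_null fun k => (prob_compl_eq_zero_iff (hAm k)).2 (hA1 k)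
        have hInt : μ (⋂ k, A k) = 1 := by
          have e : (⋂ k, A k) = (⋃ k, (A k)ᶜ)ᶜ := by
            simp [Set.compl_iUnion]
          rw [e, prob_compl_eq_one_iff (MeasurableSet.iUnion fun k => (hAm k).compl)]
          exact hU
        refine le_antisymm prob_le_one ?_
        calc (1 : ENNReal) = μ (⋂ k, A k) := hInt.symm
          _ ≤ μ {S | SubgroupFn d S} := measure_mono fun S hS =>
              subgroup_of_all_pseudo d S fun k => Set.mem_iInter.1 hS k
      · have hgen : ∀ i : Fin d, μ.map (conjFn d (FreeGroup.of i)) = μ := by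
          intro i
          haveI : IsProbabilityMeasure (μ.map (conjFn d (FreeGroup.of i))) :=
            Measure.isProbabilityMeasure_map (measurable_conjFn d _).aemeasurable
          refine ext_of_generate_finite _ generateFrom_measurableCylinders.symm
            isPiSystem_measurableCylinders ?_ (by simp)
          intro s hs
          obtain ⟨F, T, hT, rfl⟩ := (mem_measurableCylinders _).1 hs
          set g := FreeGroup.of i with hg
          set k := F.sup (fun x => max x.norm ((g⁻¹ * x * g).norm)) with hk
          have hsub : ∀ x : F, (x : FreeGroup (Fin d)) ∈ conjDom d k i := fun x => by
            have hle := Finset.le_sup (f := fun x => max x.norm ((g⁻¹ * x * g).norm)) x.2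
            rw [← hk] at hle
            exact ⟨le_trans (le_max_left _ _) hle, le_trans (le_max_right _ _) hle⟩
          let r : (↥(conjDom d k i) → Bool) → (↥F → Bool) :=
            fun f x => f ⟨x.1, hsub x⟩
          have hrm : Measurable r := meas_precomp _
          have e2 : (F.restrict ∘ conjFn d g) =
              r ∘ (fun S => fun x : conjDom d k i => S (g⁻¹ * x.1 * g)) := rfl
          have e1 : (F.restrict : (FreeGroup (Fin d) → Bool) → (F → Bool)) =
              r ∘ (fun S => fun x : conjDom d k i => S x.1) := rfl
          calc (μ.map (conjFn d g)) (cylinder F T)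
              = μ ((F.restrict ∘ conjFn d g) ⁻¹' T) := by
                rw [Measure.map_apply (measurable_conjFn d g) hT.cylinder]; rfl
            _ = μ ((fun S => fun x : conjDom d k i => S (g⁻¹ * x.1 * g)) ⁻¹' (r ⁻¹' T)) := by
                rw [e2]; rfl
            _ = (μ.map (fun S => fun x : conjDom d k i => S (g⁻¹ * x.1 * g))) (r ⁻¹' T) :=
                (Measure.map_apply (meas_precomp _) (hrm hT)).symm
            _ = (μ.map (fun S => fun x : conjDom d k i => S x.1)) (r ⁻¹' T) := by
                rw [(h k).2.2 i]
            _ = μ ((fun S => fun x : conjDom d k i => S x.1) ⁻¹' (r ⁻¹' T)) :=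
                Measure.map_apply (meas_precomp _) (hrm hT)
            _ = μ (cylinder F T) := by rw [← Set.preimage_comp, ← e1]; rfl
        intro g
        induction g using FreeGroup.induction_on with
        | C1 => rw [conjFn_one, Measure.map_id]
        | of i => exact hgen i
        | inv_of i hi =>
          have e : conjFn d (FreeGroup.of i)⁻¹ ∘ conjFn d (FreeGroup.of i) = id := by
            rw [← conjFn_mul, inv_mul_cancel, conjFn_one]
          calc μ.map (conjFn d (FreeGroup.of i)⁻¹)
              = (μ.map (conjFn d (FreeGroup.of i))).map (conjFn d (FreeGroup.of i)⁻¹) := by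
                rw [hgen i]
            _ = μ.map (conjFn d (FreeGroup.of i)⁻¹ ∘ conjFn d (FreeGroup.of i)) :=
                Measure.map_map (measurable_conjFn d _) (measurable_conjFn d _)
            _ = μ := by rw [e, Measure.map_id]
        | mul x y hx hy =>
          rw [conjFn_mul, ← Measure.map_map (measurable_conjFn d x) (measurable_conjFn d y),
            hy, hx]
  · rintro k μ ⟨hp, hs, hc⟩
    haveI := hp
    refine ⟨hp, ?_, ?_⟩
    · have e : restrictFn d k = restrictFn d k ∘ restrictFn d (k + 1) := by
        funext S x
        simp only [restrictFn, Function.comp_apply]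
        by_cases h1 : x.norm ≤ k
        · have h2 : x.norm ≤ k + 1 := h1.trans (Nat.le_succ k)
          simp [h1, h2]
        · simp [h1]
      haveI : IsProbabilityMeasure (μ.map (restrictFn d (k + 1))) :=
        Measure.isProbabilityMeasure_map (measurable_restrictFn d (k + 1)).aemeasurable
      rw [e, ← Measure.map_map (measurable_restrictFn d k) (measurable_restrictFn d (k + 1)),
        Measure.map_apply (measurable_restrictFn d k) (measurableSet_PSG d k)]
      refine le_antisymm prob_le_one ?_
      calc (1 : ENNReal)
          = (μ.map (restrictFn d (k + 1))) {S | PseudoSubgroupFn d (k + 1) S} := hs.symm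
        _ ≤ (μ.map (restrictFn d (k + 1)))
              (restrictFn d k ⁻¹' {S | PseudoSubgroupFn d k S}) :=
            measure_mono fun S hS => restrict_of_pseudo d k S hS
    · intro i
      have hsub : conjDom d k i ⊆ conjDom d (k + 1) i := fun x hx =>
        ⟨hx.1.trans (Nat.le_succ k), hx.2.trans (Nat.le_succ k)⟩
      let r : (↥(conjDom d (k + 1) i) → Bool) → (↥(conjDom d k i) → Bool) :=
        fun f x => f ⟨x.1, hsub x.2⟩
      have e1 : (fun S : FreeGroup (Fin d) → Bool => fun x : conjDom d k i => S x.1) =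
          r ∘ (fun S => fun x : conjDom d (k + 1) i => S x.1) := rfl
      have e2 : (fun S : FreeGroup (Fin d) → Bool => fun x : conjDom d k i =>
            S ((FreeGroup.of i)⁻¹ * x.1 * FreeGroup.of i)) =
          r ∘ (fun S => fun x : conjDom d (k + 1) i =>
            S ((FreeGroup.of i)⁻¹ * x.1 * FreeGroup.of i)) := rfl
      rw [e1, e2, ← Measure.map_map (meas_precomp _) (meas_precomp _),
        ← Measure.map_map (meas_precomp _) (meas_precomp _), hc i]
end

section
/- The encoding G ↦ G* of finite simple graphs into F_2 Schreier graphs (vertices = directed edges, generator a rotating among edges with common source via chosen cyclic orderings, generator b reversing edges) is injective up to isomorphism: G can be recovered from G* since the vertices of G correspond to a-orbits of V(G*) and two a-orbits are adjacent in G iff some b-orbit of size 2 meets both. -/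
/-!
The rotation orbits of darts are exactly the fibres of `Dart.fst`, so an equivalence of darts
that intertwines the rotations and the reversals maps fibres of `Dart.fst` onto fibres of
`Dart.fst`. When no vertex is isolated these fibres are the vertices, so the dart equivalence
descends to a bijection of vertices; it preserves adjacency because an edge `u v` is the dart
`(u, v)`, whose reversal has source `v`.
-/

open Function

namespace Function.Semiconj

theorem exists_iterate_apply_eq_iff {α β : Type*} {φ : α → β} {f : α → α} {g : β → β}
    (hφ : Injective φ) (h : Semiconj φ f g) (x y : α) :
    (∃ n : ℕ, g^[n] (φ x) = φ y) ↔ ∃ n : ℕ, f^[n] x = y := by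
  simp only [← (h.iterate_right _).eq, hφ.eq_iff]

end Function.Semiconj

namespace SimpleGraph

variable {V V₁ V₂ : Type*} {G : SimpleGraph V} {G₁ : SimpleGraph V₁} {G₂ : SimpleGraph V₂}

theorem adj_iff_exists_dart (u v : V) : G.Adj u v ↔ ∃ e : G.Dart, e.fst = u ∧ e.snd = v :=
  ⟨fun h => ⟨⟨(u, v), h⟩, rfl, rfl⟩, by rintro ⟨e, rfl, rfl⟩; exact e.adj⟩

theorem Connected.surjective_dart_fst (h : G.Connected) (he : ∃ u v, G.Adj u v) :
    Surjective fun e : G.Dart => e.fst := by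
  obtain ⟨u, w, huw⟩ := he
  have : Nontrivial V := huw.nontrivial
  intro v
  obtain ⟨x, hvx⟩ := h.preconnected.exists_adj_of_nontrivial v
  exact ⟨⟨(v, x), hvx⟩, rfl⟩

theorem Dart.exists_iterate_eq_iff_fst_eq {rot : G.Dart → G.Dart}
    (hsrc : ∀ e, (rot e).fst = e.fst)
    (hcyc : ∀ e e' : G.Dart, e.fst = e'.fst → ∃ n : ℕ, rot^[n] e = e') (e e' : G.Dart) :
    (∃ n : ℕ, rot^[n] e = e') ↔ e.fst = e'.fst := by
  refine ⟨?_, hcyc e e'⟩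
  rintro ⟨n, rfl⟩
  have hfst : Semiconj (fun e : G.Dart => e.fst) rot id := hsrc
  rw [(hfst.iterate_right n).eq, iterate_id, id]

section DartEquiv

variable (Φ : G₁.Dart ≃ G₂.Dart) (hfst : ∀ e e', (Φ e).fst = (Φ e').fst ↔ e.fst = e'.fst)
  (hsymm : ∀ e, Φ e.symm = (Φ e).symm) (hs₁ : Surjective fun e : G₁.Dart => e.fst)
  (hs₂ : Surjective fun e : G₂.Dart => e.fst)

noncomputable def Dart.vertexMap : V₁ → V₂ := fun v => (Φ (surjInv hs₁ v)).fst

include hfst in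
theorem Dart.vertexMap_fst (e : G₁.Dart) : Dart.vertexMap Φ hs₁ e.fst = (Φ e).fst :=
  (hfst _ _).2 (surjInv_eq hs₁ e.fst)

include hfst hsymm in
theorem Dart.vertexMap_snd (e : G₁.Dart) : Dart.vertexMap Φ hs₁ e.snd = (Φ e).snd := by
  have := Dart.vertexMap_fst Φ hfst hs₁ e.symm
  rwa [hsymm] at this

include hfst in
theorem Dart.vertexMap_injective : Injective (Dart.vertexMap Φ hs₁) := by
  intro u v huv
  obtain ⟨e, rfl⟩ := hs₁ u
  obtain ⟨e', rfl⟩ := hs₁ v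
  rwa [Dart.vertexMap_fst Φ hfst, Dart.vertexMap_fst Φ hfst, hfst] at huv

include hfst hs₂ in
theorem Dart.vertexMap_bijective : Bijective (Dart.vertexMap Φ hs₁) := by
  refine ⟨Dart.vertexMap_injective Φ hfst hs₁, fun w => ?_⟩
  obtain ⟨d, rfl⟩ := hs₂ w
  exact ⟨(Φ.symm d).fst, by rw [Dart.vertexMap_fst Φ hfst, Φ.apply_symm_apply]⟩

include hfst hsymm in
theorem Dart.vertexMap_adj_iff {u v : V₁} :
    G₂.Adj (Dart.vertexMap Φ hs₁ u) (Dart.vertexMap Φ hs₁ v) ↔ G₁.Adj u v := by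
  refine ⟨fun h => ?_, fun h => ?_⟩
  · set e := Φ.symm ⟨(Dart.vertexMap Φ hs₁ u, Dart.vertexMap Φ hs₁ v), h⟩
    have hu : e.fst = u := Dart.vertexMap_injective Φ hfst hs₁ <| by
      rw [Dart.vertexMap_fst Φ hfst, Φ.apply_symm_apply]
    have hv : e.snd = v := Dart.vertexMap_injective Φ hfst hs₁ <| by
      rw [Dart.vertexMap_snd Φ hfst hsymm, Φ.apply_symm_apply]
    exact hu ▸ hv ▸ e.adj
  · let e : G₁.Dart := ⟨(u, v), h⟩
    rw [show u = e.fst from rfl, show v = e.snd from rfl,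
      Dart.vertexMap_fst Φ hfst, Dart.vertexMap_snd Φ hfst hsymm]
    exact (Φ e).adj

noncomputable def Iso.ofDartEquiv : G₁ ≃g G₂ where
  toEquiv := Equiv.ofBijective _ (Dart.vertexMap_bijective Φ hfst hs₁ hs₂)
  map_rel_iff' := Dart.vertexMap_adj_iff Φ hfst hsymm hs₁

end DartEquiv

end SimpleGraph

open SimpleGraph in
theorem graph_encoding_injective_up_to_iso_general
    {V₁ V₂ : Type}
    (G₁ : SimpleGraph V₁) (G₂ : SimpleGraph V₂)
    (h₁ : G₁.Connected) (h₂ : G₂.Connected)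
    (he₁ : ∃ u v, G₁.Adj u v) (he₂ : ∃ u v, G₂.Adj u v)
    (rot₁ : G₁.Dart → G₁.Dart) (rot₂ : G₂.Dart → G₂.Dart)
    (hsrc₁ : ∀ e : G₁.Dart, (rot₁ e).fst = e.fst)
    (hcyc₁ : ∀ e e' : G₁.Dart, e.fst = e'.fst → ∃ n : ℕ, rot₁^[n] e = e')
    (hsrc₂ : ∀ e : G₂.Dart, (rot₂ e).fst = e.fst)
    (hcyc₂ : ∀ e e' : G₂.Dart, e.fst = e'.fst → ∃ n : ℕ, rot₂^[n] e = e')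
    (Φ : G₁.Dart ≃ G₂.Dart)
    (hΦrot : ∀ e : G₁.Dart, Φ (rot₁ e) = rot₂ (Φ e))
    (hΦsymm : ∀ e : G₁.Dart, Φ e.symm = (Φ e).symm) :
    (∀ e e' : G₁.Dart, (∃ n : ℕ, rot₁^[n] e = e') ↔ e.fst = e'.fst) ∧
    (∀ u v : V₁, G₁.Adj u v ↔ ∃ e : G₁.Dart, e.fst = u ∧ e.snd = v) ∧
    Nonempty (G₁ ≃g G₂) := by
  have horbit₁ := Dart.exists_iterate_eq_iff_fst_eq hsrc₁ hcyc₁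
  have hfst : ∀ e e', (Φ e).fst = (Φ e').fst ↔ e.fst = e'.fst := fun e e' => by
    rw [← Dart.exists_iterate_eq_iff_fst_eq hsrc₂ hcyc₂,
      Semiconj.exists_iterate_apply_eq_iff Φ.injective hΦrot, horbit₁]
  exact ⟨horbit₁, adj_iff_exists_dart,
    ⟨Iso.ofDartEquiv Φ hfst hΦsymm (h₁.surjective_dart_fst he₁) (h₂.surjective_dart_fst he₂)⟩⟩

theorem graph_encoding_injective_up_to_iso
    {V₁ V₂ : Type} [Fintype V₁] [Fintype V₂]
    (G₁ : SimpleGraph V₁) (G₂ : SimpleGraph V₂)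
    [DecidableRel G₁.Adj] [DecidableRel G₂.Adj]
    (h₁ : G₁.Connected) (h₂ : G₂.Connected)
    (he₁ : ∃ u v, G₁.Adj u v) (he₂ : ∃ u v, G₂.Adj u v)
    (rot₁ : G₁.Dart → G₁.Dart) (rot₂ : G₂.Dart → G₂.Dart)
    (hsrc₁ : ∀ e : G₁.Dart, (rot₁ e).fst = e.fst)
    (hcyc₁ : ∀ e e' : G₁.Dart, e.fst = e'.fst → ∃ n : ℕ, rot₁^[n] e = e')
    (hsrc₂ : ∀ e : G₂.Dart, (rot₂ e).fst = e.fst)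
    (hcyc₂ : ∀ e e' : G₂.Dart, e.fst = e'.fst → ∃ n : ℕ, rot₂^[n] e = e')
    (Φ : G₁.Dart ≃ G₂.Dart)
    (hΦrot : ∀ e : G₁.Dart, Φ (rot₁ e) = rot₂ (Φ e))
    (hΦsymm : ∀ e : G₁.Dart, Φ e.symm = (Φ e).symm) :
    (∀ e e' : G₁.Dart, (∃ n : ℕ, rot₁^[n] e = e') ↔ e.fst = e'.fst) ∧
    (∀ u v : V₁, G₁.Adj u v ↔ ∃ e : G₁.Dart, e.fst = u ∧ e.snd = v) ∧
    Nonempty (G₁ ≃g G₂) :=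
  graph_encoding_injective_up_to_iso_general G₁ G₂ h₁ h₂ he₁ he₂ rot₁ rot₂ hsrc₁ hcyc₁ hsrc₂ hcyc₂ Φ
    hΦrot hΦsymm
end
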